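/- Let (V, Δ, c) be a vertex coalgebra (coefficient form), set D* := (Id ⊗ c) ∘ Δ_{−2} and D*^{(i)} := (D*)^i / i!. Then for every m ∈ ℤ and every i ≥ 0, (D*^{(i)} ⊗ Id) ∘ Δ_m = (−1)^i C(m,i) · Δ_{m−i} as maps V → V ⊗ V. -/

import Mathlib

set_option maxRecDepth 8000

open TensorProduct

noncomputable section

/-- Generalized binomial coefficient `C(p,i) = p(p-1)⋯(p-i+1)/i!` as a complex number. -/
def cbin (p : ℤ) (i : ℕ) : ℂ :=
  (∏ k ∈ Finset.range i, ((p : ℂ) - (k : ℂ))) / (i.factorial : ℂ)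

variable {V : Type*} [AddCommGroup V] [Module ℂ V]

/-- The flip `T` on `V ⊗ V`, `T (u ⊗ w) = w ⊗ u`. -/
def Tflip : V ⊗[ℂ] V →ₗ[ℂ] V ⊗[ℂ] V := (TensorProduct.comm ℂ V V).toLinearMap

/-- `T ⊗ Id` acting on `V ⊗ (V ⊗ V)` (conjugated by the associator). -/
def TId : (V ⊗[ℂ] (V ⊗[ℂ] V)) →ₗ[ℂ] (V ⊗[ℂ] (V ⊗[ℂ] V)) :=
  (TensorProduct.assoc ℂ V V V).toLinearMap ∘ₗ
    (TensorProduct.map Tflip LinearMap.id) ∘ₗ (TensorProduct.assoc ℂ V V V).symm.toLinearMap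

/-- `(Δₙ ⊗ Id) ∘ Δₘ` as a map `V → V ⊗ (V ⊗ V)` (via the associator). -/
def DL (Δ : ℤ → V →ₗ[ℂ] V ⊗[ℂ] V) (n m : ℤ) : V →ₗ[ℂ] (V ⊗[ℂ] (V ⊗[ℂ] V)) :=
  (TensorProduct.assoc ℂ V V V).toLinearMap ∘ₗ (TensorProduct.map (Δ n) LinearMap.id) ∘ₗ Δ m

/-- `(Id ⊗ Δₙ) ∘ Δₘ` as a map `V → V ⊗ (V ⊗ V)`. -/
def DR (Δ : ℤ → V →ₗ[ℂ] V ⊗[ℂ] V) (n m : ℤ) : V →ₗ[ℂ] (V ⊗[ℂ] (V ⊗[ℂ] V)) :=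
  (TensorProduct.map LinearMap.id (Δ n)) ∘ₗ Δ m

/-- Truncation: for each `v` there is `N` with `Δₙ v = 0` for all `n ≤ N`. -/
def Truncation (Δ : ℤ → V →ₗ[ℂ] V ⊗[ℂ] V) : Prop :=
  ∀ v : V, ∃ N : ℤ, ∀ n ≤ N, Δ n v = 0

/-- `(Id ⊗ c)` composed with the canonical identification `V ⊗ ℂ ≅ V`. -/
def IdC (c : V →ₗ[ℂ] ℂ) : (V ⊗[ℂ] V) →ₗ[ℂ] V :=
  (TensorProduct.rid ℂ V).toLinearMap ∘ₗ TensorProduct.map LinearMap.id c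

/-- `(c ⊗ Id)` composed with the canonical identification `ℂ ⊗ V ≅ V`. -/
def CId (c : V →ₗ[ℂ] ℂ) : (V ⊗[ℂ] V) →ₗ[ℂ] V :=
  (TensorProduct.lid ℂ V).toLinearMap ∘ₗ TensorProduct.map c LinearMap.id

/-- Divided power `D*^{(i)} = (D*)^i / i!`. -/
def dpow (D : V →ₗ[ℂ] V) (i : ℕ) : V →ₗ[ℂ] V := ((i.factorial : ℂ)⁻¹) • (D ^ i)

/-- The Co-Borcherds identity at `(p,q,r)`. -/
def CoBorcherds (Δ : ℤ → V →ₗ[ℂ] V ⊗[ℂ] V) (p q r : ℤ) : Prop :=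
  ∀ v : V,
    (∑ᶠ i : ℕ, cbin p i • DL Δ (r + i) (p + q - i) v) =
      ∑ᶠ i : ℕ, ((-1 : ℂ) ^ i * cbin r i) •
        (DR Δ (q + i) (p + r - i) v - (-1 : ℂ) ^ r • TId (DR Δ (p + i) (q + r - i) v))

/-- Left counit: `(c ⊗ Id) ∘ Δₙ` is the identity for `n = -1` and zero otherwise. -/
def LeftCounit (Δ : ℤ → V →ₗ[ℂ] V ⊗[ℂ] V) (c : V →ₗ[ℂ] ℂ) : Prop :=
  CId c ∘ₗ Δ (-1) = LinearMap.id ∧ ∀ n : ℤ, n ≠ -1 → CId c ∘ₗ Δ n = 0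

/-- Cocreation: `(Id ⊗ c) ∘ Δₙ = 0` for `n ≥ 0` and `(Id ⊗ c) ∘ Δ₋₁ = Id`. -/
def Cocreation (Δ : ℤ → V →ₗ[ℂ] V ⊗[ℂ] V) (c : V →ₗ[ℂ] ℂ) : Prop :=
  (∀ n : ℤ, 0 ≤ n → IdC c ∘ₗ Δ n = 0) ∧ IdC c ∘ₗ Δ (-1) = LinearMap.id

/-- Exponential cocreation: `(Id ⊗ c) ∘ Δ₋₁₋ᵢ = D*^{(i)}` for all `i ≥ 0`,
and `(Id ⊗ c) ∘ Δₙ = 0` for all `n ≥ 0`. -/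
def ExpCocreation (Δ : ℤ → V →ₗ[ℂ] V ⊗[ℂ] V) (c : V →ₗ[ℂ] ℂ) (D : V →ₗ[ℂ] V) : Prop :=
  (∀ i : ℕ, IdC c ∘ₗ Δ (-1 - i) = dpow D i) ∧ ∀ n : ℤ, 0 ≤ n → IdC c ∘ₗ Δ n = 0

/-- The `D*` formula: `(D* ⊗ Id) ∘ Δ_q = -q • Δ_{q-1}`. -/
def DstFormula (Δ : ℤ → V →ₗ[ℂ] V ⊗[ℂ] V) (D : V →ₗ[ℂ] V) : Prop :=
  ∀ q : ℤ, TensorProduct.map D LinearMap.id ∘ₗ Δ q = (-(q : ℂ)) • Δ (q - 1)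

/-- Coefficient Co-Skew symmetry. -/
def CoSkew (Δ : ℤ → V →ₗ[ℂ] V ⊗[ℂ] V) (D : V →ₗ[ℂ] V) : Prop :=
  ∀ (r : ℤ) (v : V),
    {i : ℕ | Δ (r + i) (dpow D i v) ≠ 0}.Finite ∧
    Tflip (Δ r v) = ∑ᶠ i : ℕ, (-1 : ℂ) ^ (r + 1 + (i : ℤ)) • Δ (r + i) (dpow D i v)

/-- Coefficient Co-Commutator formula at `(p,q)`. -/
def CoCommutator (Δ : ℤ → V →ₗ[ℂ] V ⊗[ℂ] V) (p q : ℤ) : Prop :=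
  ∀ v : V,
    (∑ᶠ i : ℕ, cbin p i • DL Δ (i : ℤ) (p + q - i) v) = DR Δ q p v - TId (DR Δ p q v)

/-- Coefficient Co-Associator formula at `(q,r)`. -/
def CoAssociator (Δ : ℤ → V →ₗ[ℂ] V ⊗[ℂ] V) (q r : ℤ) : Prop :=
  ∀ v : V,
    DL Δ r q v =
      ∑ᶠ i : ℕ, ((-1 : ℂ) ^ i * cbin r i) •
        (DR Δ (q + i) (r - i) v - (-1 : ℂ) ^ r • TId (DR Δ (i : ℤ) (q + r - i) v))

/- ### Auxiliary lemmas -/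

lemma vc'CId_tmul (c : V →ₗ[ℂ] ℂ) (a b : V) : CId c (a ⊗ₜ[ℂ] b) = c a • b := by
  simp [CId]

lemma vc'IdC_tmul (c : V →ₗ[ℂ] ℂ) (a b : V) : IdC c (a ⊗ₜ[ℂ] b) = c b • a := by
  simp [IdC]

lemma vc'F_assoc (c : V →ₗ[ℂ] ℂ) (x : V ⊗[ℂ] V) (w : V) :
    TensorProduct.map (LinearMap.id) (CId c) ((TensorProduct.assoc ℂ V V V) (x ⊗ₜ[ℂ] w)) =
      IdC c x ⊗ₜ[ℂ] w := by
  induction x using TensorProduct.induction_on with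
  | zero => simp
  | tmul a b =>
      rw [TensorProduct.assoc_tmul, TensorProduct.map_tmul, vc'CId_tmul, vc'IdC_tmul,
        LinearMap.id_apply, tmul_smul, TensorProduct.smul_tmul']
  | add x y hx hy => simp only [add_tmul, map_add, hx, hy]

lemma vc'F_TId (c : V →ₗ[ℂ] ℂ) (u : V) (x : V ⊗[ℂ] V) :
    TensorProduct.map (LinearMap.id) (CId c) (TId (u ⊗ₜ[ℂ] x)) = c u • x := by
  induction x using TensorProduct.induction_on with
  | zero => simp
  | tmul a b =>
      simp only [TId, LinearMap.comp_apply, LinearEquiv.coe_coe, TensorProduct.assoc_symm_tmul,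
        TensorProduct.map_tmul, TensorProduct.assoc_tmul, Tflip, TensorProduct.comm_tmul,
        LinearMap.id_apply, vc'CId_tmul, tmul_smul]
  | add x y hx hy => simp only [tmul_add, map_add, hx, hy, smul_add]

lemma vc'F_DL (Δ : ℤ → V →ₗ[ℂ] V ⊗[ℂ] V) (c : V →ₗ[ℂ] ℂ) (n m : ℤ) (v : V) :
    TensorProduct.map (LinearMap.id) (CId c) (DL Δ n m v) =
      TensorProduct.map (IdC c ∘ₗ Δ n) LinearMap.id (Δ m v) := by
  simp only [DL, LinearMap.comp_apply, LinearEquiv.coe_coe]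
  induction (Δ m v) using TensorProduct.induction_on with
  | zero => simp
  | tmul u w =>
      simp only [TensorProduct.map_tmul, LinearMap.id_apply, vc'F_assoc, LinearMap.comp_apply]
  | add x y hx hy => simp only [map_add, hx, hy]

lemma vc'F_DR (Δ : ℤ → V →ₗ[ℂ] V ⊗[ℂ] V) (c : V →ₗ[ℂ] ℂ) (n m : ℤ) (v : V) :
    TensorProduct.map (LinearMap.id) (CId c) (DR Δ n m v) =
      TensorProduct.map LinearMap.id (CId c ∘ₗ Δ n) (Δ m v) := by
  simp only [DR, LinearMap.comp_apply]
  rw [← LinearMap.comp_apply, ← TensorProduct.map_comp, LinearMap.id_comp]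

lemma vc'F_TId_DR (Δ : ℤ → V →ₗ[ℂ] V ⊗[ℂ] V) (c : V →ₗ[ℂ] ℂ) (n m : ℤ) (v : V) :
    TensorProduct.map (LinearMap.id) (CId c) (TId (DR Δ n m v)) =
      Δ n (CId c (Δ m v)) := by
  simp only [DR, LinearMap.comp_apply]
  induction (Δ m v) using TensorProduct.induction_on with
  | zero => simp
  | tmul u w =>
      rw [TensorProduct.map_tmul, LinearMap.id_apply, vc'F_TId, vc'CId_tmul, map_smul]
  | add x y hx hy => simp only [map_add, hx, hy]

lemma vc'cbin_zero (p : ℤ) : cbin p 0 = 1 := by simp [cbin]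

lemma vc'cbin_one (p : ℤ) : cbin p 1 = (p : ℂ) := by simp [cbin]

/-- The `D*` formula derived from the Co-Borcherds identity. -/
lemma vc'dst (Δ : ℤ → V →ₗ[ℂ] V ⊗[ℂ] V) (c : V →ₗ[ℂ] ℂ)
    (hcu : LeftCounit Δ c) (hcc : Cocreation Δ c) (htr : Truncation Δ)
    (hB : ∀ p q r : ℤ, CoBorcherds Δ p q r) (p : ℤ) :
    TensorProduct.map (IdC c ∘ₗ Δ (-2)) LinearMap.id ∘ₗ Δ p = (-(p : ℂ)) • Δ (p - 1) := by
  set D : V →ₗ[ℂ] V := IdC c ∘ₗ Δ (-2) with hD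
  ext v
  obtain ⟨N, hN⟩ := htr v
  set M : ℕ := (p - N).toNat + (p - 2 - N).toNat + (-2 - N).toNat + 2 with hM
  have h := hB p 0 (-2) v
  have hL : (∑ᶠ i : ℕ, cbin p i • DL Δ (-2 + i) (p + 0 - i) v) =
      ∑ i ∈ Finset.range M, cbin p i • DL Δ (-2 + i) (p + 0 - i) v := by
    apply finsum_eq_sum_of_support_subset
    intro i hi
    simp only [Function.mem_support] at hi
    simp only [Finset.coe_range, Set.mem_Iio]
    by_contra hic
    push_neg at hic
    apply hi
    have h1 : p + 0 - (i : ℤ) ≤ N := by omega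
    simp only [DL, LinearMap.comp_apply, hN _ h1, map_zero, LinearEquiv.coe_coe, smul_zero]
  have hR : (∑ᶠ i : ℕ, ((-1 : ℂ) ^ i * cbin (-2) i) •
        (DR Δ (0 + i) (p + -2 - i) v - (-1 : ℂ) ^ (-2 : ℤ) • TId (DR Δ (p + i) (0 + -2 - i) v))) =
      ∑ i ∈ Finset.range M, ((-1 : ℂ) ^ i * cbin (-2) i) •
        (DR Δ (0 + i) (p + -2 - i) v - (-1 : ℂ) ^ (-2 : ℤ) • TId (DR Δ (p + i) (0 + -2 - i) v)) := by
    apply finsum_eq_sum_of_support_subset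
    intro i hi
    simp only [Function.mem_support] at hi
    simp only [Finset.coe_range, Set.mem_Iio]
    by_contra hic
    push_neg at hic
    apply hi
    have h1 : p + -2 - (i : ℤ) ≤ N := by omega
    have h2 : 0 + -2 - (i : ℤ) ≤ N := by omega
    simp only [DR, LinearMap.comp_apply, hN _ h1, hN _ h2, map_zero, smul_zero, sub_zero,
      zero_sub, neg_zero]
  rw [hL, hR] at h
  have hF := congrArg (TensorProduct.map (LinearMap.id : V →ₗ[ℂ] V) (CId c)) h
  rw [map_sum, map_sum] at hF
  -- RHS vanishes
  have hRz : ∀ i ∈ Finset.range M,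
      TensorProduct.map (LinearMap.id : V →ₗ[ℂ] V) (CId c)
        (((-1 : ℂ) ^ i * cbin (-2) i) •
          (DR Δ (0 + i) (p + -2 - i) v - (-1 : ℂ) ^ (-2 : ℤ) • TId (DR Δ (p + i) (0 + -2 - i) v)))
        = 0 := by
    intro i _
    rw [map_smul, map_sub, map_smul, vc'F_DR, vc'F_TId_DR]
    have h1 : CId c ∘ₗ Δ (0 + i) = 0 := hcu.2 _ (by omega)
    have h2 : CId c (Δ (0 + -2 - i) v) = 0 := by
      have := hcu.2 (0 + -2 - i) (by omega)
      exact LinearMap.congr_fun this v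
    rw [h1, h2, map_zero, TensorProduct.map_zero_right, LinearMap.zero_apply]
    simp
  rw [Finset.sum_eq_zero hRz] at hF
  -- LHS reduces to the i = 0 and i = 1 terms
  have hLv : ∀ i ∈ Finset.range M,
      TensorProduct.map (LinearMap.id : V →ₗ[ℂ] V) (CId c)
        (cbin p i • DL Δ (-2 + i) (p + 0 - i) v)
        = cbin p i • TensorProduct.map (IdC c ∘ₗ Δ (-2 + i)) LinearMap.id (Δ (p + 0 - i) v) := by
    intro i _
    rw [map_smul, vc'F_DL]
  rw [Finset.sum_congr rfl hLv] at hF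
  have hsub : Finset.range 2 ⊆ Finset.range M := Finset.range_subset_range.mpr (by omega)
  have hvan : ∀ i ∈ Finset.range M, i ∉ Finset.range 2 →
      cbin p i • TensorProduct.map (IdC c ∘ₗ Δ (-2 + i)) LinearMap.id (Δ (p + 0 - i) v) = 0 := by
    intro i _ hi2
    have h2i : 2 ≤ i := by simp at hi2; omega
    have hz : IdC c ∘ₗ Δ (-2 + i) = 0 := hcc.1 _ (by omega)
    rw [hz, TensorProduct.map_zero_left, LinearMap.zero_apply, smul_zero]
  rw [← Finset.sum_subset hsub hvan] at hF
  rw [Finset.sum_range_succ, Finset.sum_range_one] at hF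
  simp only [Nat.cast_zero, Nat.cast_one, add_zero, sub_zero, vc'cbin_zero, vc'cbin_one,
    one_smul] at hF
  have e1 : (-2 : ℤ) + 1 = -1 := by norm_num
  rw [e1, hcc.2, TensorProduct.map_id] at hF
  rw [← hD] at hF
  simp only [LinearMap.comp_apply, LinearMap.smul_apply, neg_smul, LinearMap.id_apply] at hF ⊢
  exact eq_neg_of_add_eq_zero_left hF

theorem dividedPower_dst_formula_of_vertexCoalgebra (Δ : ℤ → V →ₗ[ℂ] V ⊗[ℂ] V) (c : V →ₗ[ℂ] ℂ)
    (hcu : LeftCounit Δ c) (hcc : Cocreation Δ c) (htr : Truncation Δ)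
    (hB : ∀ p q r : ℤ, CoBorcherds Δ p q r) :
    ∀ (m : ℤ) (i : ℕ),
      TensorProduct.map (dpow (IdC c ∘ₗ Δ (-2)) i) LinearMap.id ∘ₗ Δ m =
        ((-1 : ℂ) ^ i * cbin m i) • Δ (m - i) := by
  have hdst := vc'dst Δ c hcu hcc htr hB
  set D : V →ₗ[ℂ] V := IdC c ∘ₗ Δ (-2) with hDdef
  have key : ∀ (i : ℕ) (m : ℤ),
      TensorProduct.map (D ^ i) LinearMap.id ∘ₗ Δ m =
        ((-1 : ℂ) ^ i * ∏ k ∈ Finset.range i, ((m : ℂ) - (k : ℂ))) • Δ (m - i) := by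
    intro i
    induction i with
    | zero =>
        intro m
        simp [pow_zero, Module.End.one_eq_id, TensorProduct.map_id, LinearMap.id_comp]
    | succ i ih =>
        intro m
        have hpow : (D ^ (i + 1)) = (D ^ i) ∘ₗ D := by
          rw [pow_succ, Module.End.mul_eq_comp]
        have hsplit : TensorProduct.map ((D ^ i) ∘ₗ D) (LinearMap.id (R := ℂ) (M := V)) =
            TensorProduct.map (D ^ i) LinearMap.id ∘ₗ TensorProduct.map D LinearMap.id := by
          rw [← TensorProduct.map_comp, LinearMap.id_comp]
        rw [hpow, hsplit, LinearMap.comp_assoc, hdst m, LinearMap.comp_smul, ih (m - 1),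
          smul_smul]
        have hprod : (∏ k ∈ Finset.range (i + 1), ((m : ℂ) - (k : ℂ))) =
            (∏ k ∈ Finset.range i, (((m - 1 : ℤ) : ℂ) - (k : ℂ))) * (m : ℂ) := by
          rw [Finset.prod_range_succ']
          congr 1
          · apply Finset.prod_congr rfl
            intro k _
            push_cast
            ring
          · norm_num
        congr 1
        · rw [hprod]
          ring
        · congr 1
          push_cast
          ring
  intro m i
  rw [dpow, TensorProduct.map_smul_left, LinearMap.smul_comp, key i m, smul_smul]
  congr 1
  rw [cbin, div_eq_mul_inv]
  ring

end
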